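/- Let q > 1 be a real number, let (k_1, ℓ_1), ..., (k_n, ℓ_n) be pairwise distinct pairs of integers, and let c_1, ..., c_n be real numbers. Define g : ℤ → ℝ by g(t) = Σ_{i=1}^n c_i t^{k_i} q^{ℓ_i t}. If there exists a_0 ∈ ℤ such that g(t) = 0 for all integers t ≥ a_0, then c_i = 0 for all i. -/

import Mathlib

/-!
Index the terms `t ^ k * q ^ (ℓ * t)` by `(ℓ, k)` in lexicographic order: each term is
little-o of every later one, because for `ℓ < ℓ'` the factor `q ^ ((ℓ - ℓ') * t)` beats any
power of `t`. Along such an asymptotic scale, an eventually vanishing finite combination must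
have leading coefficient zero (divide by the leading term and let `t → ∞`), and induction on the
number of terms removes them one by one.
-/

open Filter Asymptotics Finset Topology

section AsymptoticScale

variable {α ι 𝕜 : Type*} [NormedField 𝕜] {l : Filter α} {u : ι → α → 𝕜}

theorem eq_zero_of_sum_mul_eventuallyEq_zero [LinearOrder ι]
    (hu : ∀ i j, i < j → u i =o[l] u j) (hne : ∀ i, ∃ᶠ x in l, u i x ≠ 0) {c : ι → 𝕜}
    (s : Finset ι) (hs : (fun x => ∑ i ∈ s, c i * u i x) =ᶠ[l] 0) : ∀ i ∈ s, c i = 0 := by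
  classical
  induction s using Finset.induction_on_max with
  | empty => simp
  | insert a s hlt ih =>
    have ha : a ∉ s := fun h => (hlt a h).false
    have hrest : (fun x => ∑ i ∈ s, c i * u i x) =o[l] u a :=
      (IsLittleO.sum fun i hi => (hu i a (hlt i hi)).const_mul_left (c i)).congr_left
        fun x => by simp only [Finset.sum_apply]
    have hca : c a = 0 := by
      by_contra hca
      refine isLittleO_irrefl (hne a) ((isLittleO_const_mul_left_iff hca).1 ?_)
      refine hrest.neg_left.congr' ?_ EventuallyEq.rfl
      filter_upwards [hs] with x hx
      simp only [Finset.sum_insert ha, Pi.zero_apply] at hx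
      linear_combination -hx
    have hs' : (fun x => ∑ i ∈ s, c i * u i x) =ᶠ[l] 0 := by
      filter_upwards [hs] with x hx
      simpa [Finset.sum_insert ha, hca] using hx
    simpa [hca] using ih hs'

theorem eq_zero_of_sum_comp_mul_eventuallyEq_zero {κ : Type*} [LinearOrder ι]
    (hu : ∀ i j, i < j → u i =o[l] u j) (hne : ∀ i, ∃ᶠ x in l, u i x ≠ 0) {e : κ → ι}
    (he : Function.Injective e) {c : κ → 𝕜} (s : Finset κ)
    (hs : (fun x => ∑ i ∈ s, c i * u (e i) x) =ᶠ[l] 0) : ∀ i ∈ s, c i = 0 := by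
  classical
  intro i hi
  rw [← he.extend_apply c 0 i]
  refine eq_zero_of_sum_mul_eventuallyEq_zero hu hne (s.image e) ?_ (e i) (mem_image_of_mem e hi)
  simpa only [sum_image he.injOn, he.extend_apply] using hs

end AsymptoticScale

theorem tendsto_zpow_mul_zpow_mul_atTop_nhds_zero {q : ℝ} (hq : 1 < q) {a b : ℤ}
    (h : b < 0 ∨ b = 0 ∧ a < 0) :
    Tendsto (fun t : ℤ => (t : ℝ) ^ a * q ^ (b * t)) atTop (𝓝 0) := by
  rcases h with hb | ⟨rfl, ha⟩
  · have hlog : 0 < -b * Real.log q := mul_pos (by exact_mod_cast neg_pos.2 hb) (Real.log_pos hq)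
    refine ((tendsto_rpow_mul_exp_neg_mul_atTop_nhds_zero a _ hlog).comp
      tendsto_intCast_atTop_atTop).congr fun t => ?_
    simp only [Function.comp_apply, Real.rpow_intCast]
    rw [← Real.rpow_intCast q, Real.rpow_def_of_pos (one_pos.trans hq)]
    push_cast
    ring_nf
  · simp only [zero_mul, zpow_zero, mul_one]
    exact (tendsto_zpow_atTop_zero ha).comp tendsto_intCast_atTop_atTop

/-- The term `t ^ k * q ^ (ℓ * t)`, indexed by `toLex (ℓ, k)` so that the order of `ℤ ×ₗ ℤ` is
the order of growth. -/
noncomputable def expMonomial (q : ℝ) (p : ℤ ×ₗ ℤ) (t : ℤ) : ℝ :=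
  (t : ℝ) ^ (ofLex p).2 * q ^ ((ofLex p).1 * t)

theorem expMonomial_ne_zero {q : ℝ} (hq : q ≠ 0) (p : ℤ ×ₗ ℤ) {t : ℤ} (ht : t ≠ 0) :
    expMonomial q p t ≠ 0 :=
  mul_ne_zero (zpow_ne_zero _ (Int.cast_ne_zero.2 ht)) (zpow_ne_zero _ hq)

theorem frequently_expMonomial_ne_zero {q : ℝ} (hq : q ≠ 0) (p : ℤ ×ₗ ℤ) :
    ∃ᶠ t in atTop, expMonomial q p t ≠ 0 :=
  (eventually_gt_atTop 0).frequently.mono fun _ ht => expMonomial_ne_zero hq p ht.ne'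

theorem expMonomial_isLittleO {q : ℝ} (hq : 1 < q) {p p' : ℤ ×ₗ ℤ} (h : p < p') :
    expMonomial q p =o[atTop] expMonomial q p' := by
  have hq0 : q ≠ 0 := (one_pos.trans hq).ne'
  have hne : ∀ᶠ t : ℤ in atTop, t ≠ 0 := (eventually_gt_atTop 0).mono fun _ ht => ht.ne'
  rw [isLittleO_iff_tendsto' (hne.mono fun t ht h0 => absurd h0 (expMonomial_ne_zero hq0 p' ht))]
  refine (tendsto_zpow_mul_zpow_mul_atTop_nhds_zero hq (a := (ofLex p).2 - (ofLex p').2)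
    (b := (ofLex p).1 - (ofLex p').1) ?_).congr' ?_
  · rcases Prod.Lex.lt_iff.1 h with h | ⟨h1, h2⟩ <;> omega
  · filter_upwards [hne] with t ht
    have ht' : (t : ℝ) ≠ 0 := Int.cast_ne_zero.2 ht
    simp only [expMonomial, sub_mul, zpow_sub₀ ht', zpow_sub₀ hq0]
    field_simp

/-- If a function `g(t) = ∑ cᵢ t^{kᵢ} q^{ℓᵢ t}` (with `q > 1` and pairwise distinct
pairs `(kᵢ, ℓᵢ)` of integers) vanishes at all sufficiently large integers `t`,
then all coefficients `cᵢ` vanish. -/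
theorem stmt4 {q : ℝ} (hq : 1 < q) {n : ℕ} (k l : Fin n → ℤ)
    (hdist : Function.Injective (fun i => (k i, l i)))
    (c : Fin n → ℝ)
    (hvanish : ∃ a₀ : ℤ, ∀ t : ℤ, a₀ ≤ t →
      ∑ i, c i * (t : ℝ) ^ (k i) * q ^ (l i * t) = 0) :
    ∀ i, c i = 0 := by
  obtain ⟨a₀, ha₀⟩ := hvanish
  have hinj : Function.Injective fun i => toLex (l i, k i) := fun i j hij =>
    hdist (by simpa [and_comm] using hij)
  intro i
  refine eq_zero_of_sum_comp_mul_eventuallyEq_zero (fun _ _ => expMonomial_isLittleO hq)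
    (frequently_expMonomial_ne_zero (one_pos.trans hq).ne') hinj univ ?_ i (mem_univ i)
  filter_upwards [eventually_ge_atTop a₀] with t ht
  simpa [expMonomial, mul_assoc] using ha₀ t ht
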